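/- arXiv:math/0401285 — 9 statements merged into one kernel-verified Lean document; each statement's English description precedes it below -/
import Mathlib

section
/- The set K̃ of all elements r of a field K that admit a finite adequate set is a subfield of K. In particular: 0 and 1 belong to K̃; if r ∈ K̃ then −r ∈ K̃; if r ∈ K̃ and r ≠ 0 then r⁻¹ ∈ K̃; and K̃ is closed under addition and multiplication. -/
/-- A finite set `A` is adequate for `r`: it contains `r`, and every map `f`
preserving `1` (when `1 ∈ A`) and preserving sums/products lying in `A` fixes `r`. -/
def Adequate {K : Type*} [Field K] (A : Finset K) (r : K) : Prop :=
  r ∈ A ∧ ∀ f : K → K,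
    ((1 : K) ∈ A → f 1 = 1) →
    (∀ a b : K, a ∈ A → b ∈ A → a + b ∈ A → f (a + b) = f a + f b) →
    (∀ a b : K, a ∈ A → b ∈ A → a * b ∈ A → f (a * b) = f a * f b) →
    f r = r

lemma adequate_mono {K : Type*} [Field K] {A C : Finset K} {r : K}
    (hsub : A ⊆ C) (hA : Adequate A r) :
    ∀ f : K → K,
    ((1 : K) ∈ C → f 1 = 1) →
    (∀ a b : K, a ∈ C → b ∈ C → a + b ∈ C → f (a + b) = f a + f b) →
    (∀ a b : K, a ∈ C → b ∈ C → a * b ∈ C → f (a * b) = f a * f b) →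
    f r = r := by
  intro f h1 hadd hmul
  exact hA.2 f (fun h => h1 (hsub h))
    (fun a b ha hb hab => hadd a b (hsub ha) (hsub hb) (hsub hab))
    (fun a b ha hb hab => hmul a b (hsub ha) (hsub hb) (hsub hab))

lemma fzero {K : Type*} [Field K] {C : Finset K} (f : K → K)
    (h0 : (0 : K) ∈ C)
    (hadd : ∀ a b : K, a ∈ C → b ∈ C → a + b ∈ C → f (a + b) = f a + f b) :
    f 0 = 0 := by
  have h := hadd 0 0 h0 h0 (by simpa using h0)
  rw [add_zero] at h
  have : f 0 + 0 = f 0 + f 0 := by rw [add_zero]; exact h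
  exact (add_left_cancel this).symm

/-- The set K̃ of elements admitting a finite adequate set is a subfield of K. -/
theorem tilde_is_subfield (K : Type*) [Field K] :
    ∃ S : Subfield K, (S : Set K) = {r : K | ∃ A : Finset K, Adequate A r} := by
  classical
  refine ⟨{
    carrier := {r : K | ∃ A : Finset K, Adequate A r}
    one_mem' := ⟨{1}, Finset.mem_singleton_self 1,
      fun f h1 _ _ => h1 (Finset.mem_singleton_self 1)⟩
    zero_mem' := ⟨{0}, Finset.mem_singleton_self 0,
      fun f _ hadd _ => fzero f (Finset.mem_singleton_self 0) hadd⟩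
    add_mem' := ?_
    mul_mem' := ?_
    neg_mem' := ?_
    inv_mem' := ?_ }, rfl⟩
  · rintro x y ⟨A, hA⟩ ⟨B, hB⟩
    refine ⟨insert (x * y) (A ∪ B), by simp, ?_⟩
    intro f h1 hadd hmul
    have hAsub : A ⊆ insert (x * y) (A ∪ B) := fun a ha => by simp [ha]
    have hBsub : B ⊆ insert (x * y) (A ∪ B) := fun a ha => by simp [ha]
    have hx : f x = x := adequate_mono hAsub hA f h1 hadd hmul
    have hy : f y = y := adequate_mono hBsub hB f h1 hadd hmul
    have := hmul x y (hAsub hA.1) (hBsub hB.1) (by simp)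
    rw [hx, hy] at this
    exact this
  · rintro x y ⟨A, hA⟩ ⟨B, hB⟩
    refine ⟨insert (x + y) (A ∪ B), by simp, ?_⟩
    intro f h1 hadd hmul
    have hAsub : A ⊆ insert (x + y) (A ∪ B) := fun a ha => by simp [ha]
    have hBsub : B ⊆ insert (x + y) (A ∪ B) := fun a ha => by simp [ha]
    have hx : f x = x := adequate_mono hAsub hA f h1 hadd hmul
    have hy : f y = y := adequate_mono hBsub hB f h1 hadd hmul
    have := hadd x y (hAsub hA.1) (hBsub hB.1) (by simp)
    rw [hx, hy] at this
    exact this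
  · rintro x ⟨A, hA⟩
    refine ⟨insert 0 (insert (-x) A), by simp, ?_⟩
    intro f h1 hadd hmul
    have hAsub : A ⊆ insert 0 (insert (-x) A) := fun a ha => by simp [ha]
    have hx : f x = x := adequate_mono hAsub hA f h1 hadd hmul
    have h0 : f 0 = 0 := fzero f (by simp) hadd
    have := hadd x (-x) (hAsub hA.1) (by simp) (by simp)
    rw [add_neg_cancel, h0, hx] at this
    exact (eq_neg_of_add_eq_zero_right this.symm)
  · rintro x ⟨A, hA⟩
    by_cases hx0 : x = 0
    · subst hx0
      exact ⟨{0}, by simpa using ⟨Finset.mem_singleton_self 0,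
        fun f _ hadd _ => fzero f (Finset.mem_singleton_self 0) hadd⟩⟩
    · refine ⟨insert 1 (insert x⁻¹ A), by simp, ?_⟩
      intro f h1 hadd hmul
      have hAsub : A ⊆ insert 1 (insert x⁻¹ A) := fun a ha => by simp [ha]
      have hx : f x = x := adequate_mono hAsub hA f h1 hadd hmul
      have := hmul x x⁻¹ (hAsub hA.1) (by simp) (by simp [mul_inv_cancel₀ hx0])
      rw [mul_inv_cancel₀ hx0, h1 (by simp), hx] at this
      exact (eq_inv_of_mul_eq_one_right this.symm)
end

section
/- If K is a field of positive characteristic, then K̃ equals the prime field of K (the image of the prime subfield F_p in K). -/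
lemma adequate_natCast {K : Type*} [Field K] (p : ℕ) [Fact p.Prime] [CharP K p] (n : ℕ) :
    ∃ A : Finset K, Adequate A ((n : K)) := by
  classical
  refine ⟨(Finset.range p).image (Nat.cast : ℕ → K), ?_, ?_⟩
  · -- every natCast lies in the image
    have hmem : ∀ m : ℕ, (m : K) ∈ (Finset.range p).image (Nat.cast : ℕ → K) := by
      intro m
      have h1 : ((m % p : ℕ) : K) = (m : K) := by
        conv_rhs => rw [← Nat.mod_add_div m p]
        push_cast
        rw [CharP.cast_eq_zero K p]
        ring
      rw [← h1]
      exact Finset.mem_image.2 ⟨m % p, Finset.mem_range.2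
        (Nat.mod_lt _ (Fact.out (p := p.Prime)).pos), rfl⟩
    exact hmem n
  · intro f h1 hadd _hmul
    have hmem : ∀ m : ℕ, (m : K) ∈ (Finset.range p).image (Nat.cast : ℕ → K) := by
      intro m
      have h1 : ((m % p : ℕ) : K) = (m : K) := by
        conv_rhs => rw [← Nat.mod_add_div m p]
        push_cast
        rw [CharP.cast_eq_zero K p]
        ring
      rw [← h1]
      exact Finset.mem_image.2 ⟨m % p, Finset.mem_range.2
        (Nat.mod_lt _ (Fact.out (p := p.Prime)).pos), rfl⟩
    have key : ∀ m : ℕ, f ((m : K)) = (m : K) := by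
      intro m
      induction m with
      | zero =>
        have h0 : f ((0 : K) + 0) = f 0 + f 0 := by
          refine hadd 0 0 ?_ ?_ ?_ <;> simpa using hmem 0
        simp only [add_zero] at h0
        have h0' : f 0 + 0 = f 0 + f 0 := by rw [add_zero]; exact h0
        simpa using (add_left_cancel h0').symm
      | succ k ih =>
        have h0 : f ((k : K) + 1) = f (k : K) + f 1 := by
          refine hadd _ _ ?_ ?_ ?_
          · exact hmem k
          · simpa using hmem 1
          · simpa using hmem (k + 1)
        push_cast
        rw [h0, ih, h1 (by simpa using hmem 1)]
    exact key n

/-- In positive characteristic, K̃ is the prime field. -/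
theorem tilde_eq_prime_field_of_charP {K : Type*} [Field K] (p : ℕ) [Fact p.Prime]
    [CharP K p] :
    {r : K | ∃ A : Finset K, Adequate A r} = ((⊥ : Subfield K) : Set K) := by
  classical
  have hp : p.Prime := Fact.out
  have hp2 : 2 ≤ p := hp.two_le
  let φ : ZMod p →+* K := ZMod.castHom (dvd_refl p) K
  ext r
  simp only [Set.mem_setOf_eq, SetLike.mem_coe]
  constructor
  · rintro ⟨A, hrA, hf⟩
    -- Frobenius fixes r
    have hrp : r ^ p = r := by
      refine hf (fun x => x ^ p) (fun _ => one_pow p)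
        (fun a b _ _ _ => add_pow_char a b p) (fun a b _ _ _ => mul_pow a b p)
    -- root counting for X^p - X
    set q : Polynomial K := Polynomial.X ^ p - Polynomial.X with hq
    have hdeg : q.natDegree = p := by
      rw [hq]
      rw [Polynomial.natDegree_sub_eq_left_of_natDegree_lt] <;>
        simp [Polynomial.natDegree_X_pow, Polynomial.natDegree_X]
      omega
    have hq0 : q ≠ 0 := fun h => by
      rw [h, Polynomial.natDegree_zero] at hdeg; omega
    have hroot : ∀ x : K, x ^ p = x → x ∈ q.roots := by
      intro x hx
      rw [Polynomial.mem_roots hq0]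
      simp [hq, Polynomial.IsRoot, hx]
    let S : Finset K := Finset.univ.image φ
    have hScard : S.card = p := by
      rw [Finset.card_image_of_injective _ (φ.injective)]
      simp [ZMod.card]
    have hSsub : S ⊆ q.roots.toFinset := by
      intro s hs
      obtain ⟨a, _, ha⟩ := Finset.mem_image.1 hs
      rw [Multiset.mem_toFinset]
      refine hroot s ?_
      rw [← ha, ← map_pow, ZMod.pow_card]
    by_cases hrS : r ∈ S
    · obtain ⟨a, _, ha⟩ := Finset.mem_image.1 hrS
      have : φ ((a.val : ℕ) : ZMod p) = r := by
        rwa [ZMod.natCast_rightInverse a]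
      rw [← this, map_natCast]
      exact natCast_mem (⊥ : Subfield K) a.val
    · exfalso
      have hsub : insert r S ⊆ q.roots.toFinset := by
        intro x hx
        rcases Finset.mem_insert.1 hx with h | h
        · rw [h, Multiset.mem_toFinset]; exact hroot r hrp
        · exact hSsub h
      have h1 : (insert r S).card = p + 1 := by
        rw [Finset.card_insert_of_notMem hrS, hScard]
      have h2 : q.roots.toFinset.card ≤ p := by
        calc q.roots.toFinset.card ≤ Multiset.card q.roots := q.roots.toFinset_card_le
          _ ≤ q.natDegree := Polynomial.card_roots' q
          _ = p := hdeg
      have := Finset.card_le_card hsub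
      omega
  · intro hr
    have : r ∈ φ.fieldRange := by
      have : (⊥ : Subfield K) ≤ φ.fieldRange := bot_le
      exact this hr
    obtain ⟨a, ha⟩ := this
    have : r = ((a.val : ℕ) : K) := by
      rw [← ha, ← map_natCast φ, ZMod.natCast_rightInverse a]
    rw [this]
    exact adequate_natCast p a.val
end

section
/- For the complex numbers, K̃ equals ℚ: an element r ∈ ℂ admits a finite adequate set if and only if r is rational. -/
open MvPolynomial

theorem IsTranscendenceBasis.exists_ringEquiv_aeval {R Ω ι : Type*} [CommRing R]
    [Field Ω] [IsAlgClosed Ω] [Algebra R Ω] {x : ι → Ω} (hx : IsTranscendenceBasis R x)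
    (φ : MvPolynomial ι R ≃+* MvPolynomial ι R) :
    ∃ σ : Ω ≃+* Ω, ∀ p, σ (aeval x p) = aeval x (φ p) := by
  have := IsAlgClosed.isAlgClosure_of_transcendence_basis x hx
  let e := hx.1.aevalEquiv.symm.toRingEquiv.trans (φ.trans hx.1.aevalEquiv.toRingEquiv)
  refine ⟨IsAlgClosure.equivOfEquiv Ω Ω e, fun p => ?_⟩
  simpa [e] using IsAlgClosure.equivOfEquiv_algebraMap Ω Ω e (hx.1.aevalEquiv p)

section MovingElements

variable {k Ω : Type*} [Field k] [Field Ω] [IsAlgClosed Ω] [Algebra k Ω] {r : Ω}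

theorem exists_ringEquiv_apply_eq_add_one_of_transcendental (hr : Transcendental k r) :
    ∃ σ : Ω ≃+* Ω, σ r = r + 1 := by
  obtain ⟨t, hrt, ht⟩ := exists_isTranscendenceBasis_superset (R := k)
    (algebraicIndependent_unique_type_iff.mpr hr : AlgebraicIndepOn k id {r})
  let shift : MvPolynomial t k ≃ₐ[k] MvPolynomial t k :=
    AlgEquiv.ofAlgHom (aeval fun i => X i + 1) (aeval fun i => X i - 1)
      (by ext; simp) (by ext; simp)
  obtain ⟨σ, hσ⟩ := ht.exists_ringEquiv_aeval shift.toRingEquiv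
  refine ⟨σ, ?_⟩
  simpa [shift] using hσ (X ⟨r, hrt rfl⟩)

theorem exists_ringEquiv_apply_ne_of_isAlgebraic [PerfectField k] (halg : IsAlgebraic k r)
    (hr : r ∉ Set.range (algebraMap k Ω)) : ∃ σ : Ω ≃+* Ω, σ r ≠ r := by
  let F := algebraicClosure k Ω
  let a : F := ⟨r, mem_algebraicClosure_iff.mpr halg⟩
  have ha : a ∉ Set.range (algebraMap k F) := fun ⟨c, hc⟩ => hr ⟨c, congrArg Subtype.val hc⟩
  obtain ⟨τ, hτ⟩ : ∃ τ : Gal(F/k), τ a ≠ a := by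
    by_contra! h
    exact ha ((InfiniteGalois.mem_range_algebraMap_iff_fixed a).mpr h)
  obtain ⟨ι, x, hx⟩ := exists_isTranscendenceBasis' F Ω
  obtain ⟨σ, hσ⟩ := hx.exists_ringEquiv_aeval (mapEquiv ι τ.toRingEquiv)
  refine ⟨σ, fun h => hτ (Subtype.ext ?_)⟩
  calc ((τ a : F) : Ω) = σ a := by simpa using (hσ (C a)).symm
    _ = a := h

theorem exists_ringEquiv_apply_ne_of_notMem_range [PerfectField k]
    (hr : r ∉ Set.range (algebraMap k Ω)) : ∃ σ : Ω ≃+* Ω, σ r ≠ r := by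
  by_cases halg : IsAlgebraic k r
  · exact exists_ringEquiv_apply_ne_of_isAlgebraic halg hr
  · obtain ⟨σ, hσ⟩ := exists_ringEquiv_apply_eq_add_one_of_transcendental halg
    exact ⟨σ, by simp [hσ]⟩

end MovingElements

section Adequate

variable {K : Type*} [Field K] {A : Finset K} {r : K}

theorem Adequate.ringHom_apply_eq (h : Adequate A r) (σ : K →+* K) : σ r = r :=
  h.2 σ (fun _ => map_one σ) (fun a b _ _ _ => map_add σ a b) (fun a b _ _ _ => map_mul σ a b)

theorem apply_intCast_eq_self {f : K → K} {N : ℕ} (hA : ∀ k : ℤ, k.natAbs ≤ N → (k : K) ∈ A)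
    (h1 : f 1 = 1) (hadd : ∀ a b : K, a ∈ A → b ∈ A → a + b ∈ A → f (a + b) = f a + f b)
    {k : ℤ} (hk : k.natAbs ≤ N) : f k = k := by
  have hnat (n : ℕ) (hn : n ≤ N) : (n : K) ∈ A ∧ (-n : K) ∈ A :=
    ⟨by exact_mod_cast hA n (by omega), by exact_mod_cast hA (-n) (by omega)⟩
  have h0A : (0 : K) ∈ A := by simpa using hA 0 (by simp)
  have f0 : f 0 = 0 := by simpa using hadd 0 0 h0A h0A (by simpa using h0A)
  have key (n : ℕ) : n ≤ N → f n = n ∧ f (-n) = -n := by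
    induction n with
    | zero => simp [f0]
    | succ n ih =>
      intro hn
      obtain ⟨ihpos, ihneg⟩ := ih (by omega)
      have h1A : (1 : K) ∈ A := by simpa using (hnat 1 (by omega)).1
      have hpos := hadd n 1 (hnat n (by omega)).1 h1A (by exact_mod_cast (hnat (n + 1) hn).1)
      have hneg := hadd (-(n + 1 : ℕ)) 1 (hnat (n + 1) hn).2 h1A
        (by simpa using (hnat n (by omega)).2)
      push_cast at hpos hneg ⊢
      rw [show -((n : K) + 1) + 1 = -n by ring, ihneg, h1] at hneg
      rw [hpos, ihpos, h1]
      exact ⟨rfl, by linear_combination -hneg⟩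
  obtain ⟨n, rfl | rfl⟩ := Int.eq_nat_or_neg k
  · exact_mod_cast (key n (by omega)).1
  · exact_mod_cast (key n (by omega)).2

theorem exists_adequate_ratCast [CharZero K] (q : ℚ) : ∃ A : Finset K, Adequate A q := by
  classical
  obtain ⟨N, hnum, hden⟩ : ∃ N : ℕ, q.num.natAbs ≤ N ∧ q.den ≤ N :=
    ⟨_, le_max_left _ _, le_max_right _ _⟩
  let A : Finset K := insert (q : K) ((Finset.Icc (-N : ℤ) N).image Int.cast)
  have hA (k : ℤ) (hk : k.natAbs ≤ N) : (k : K) ∈ A :=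
    Finset.mem_insert_of_mem (Finset.mem_image_of_mem _ (Finset.mem_Icc.mpr
      (show (-N : ℤ) ≤ k ∧ k ≤ N from ⟨by omega, by omega⟩)))
  have hqA : (q : K) ∈ A := Finset.mem_insert_self _ _
  refine ⟨A, hqA, fun f h1 hadd hmul => ?_⟩
  have hint {k : ℤ} (hk : k.natAbs ≤ N) : f k = k :=
    apply_intCast_eq_self hA (h1 (by simpa using hA 1 (by have := q.den_pos; omega))) hadd hk
  have hden_ne : ((q.den : ℤ) : K) ≠ 0 := by exact_mod_cast q.den_ne_zero
  have hprod : ((q.den : ℤ) : K) * q = q.num := by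
    exact_mod_cast congrArg (Rat.cast : ℚ → K) q.den_mul_eq_num
  have hmul_q := hmul _ _ (hA q.den (by omega)) hqA (hprod ▸ hA q.num (by omega))
  rw [hprod, hint (by omega), hint (by omega)] at hmul_q
  exact mul_left_cancel₀ hden_ne (hmul_q.symm.trans hprod.symm)

end Adequate

/-- For the complex numbers, K̃ equals ℚ. -/
theorem tilde_complex_eq_rat :
    {r : ℂ | ∃ A : Finset ℂ, Adequate A r} = Set.range ((↑) : ℚ → ℂ) := by
  ext r
  constructor
  · rintro ⟨A, hA⟩
    by_contra hr
    obtain ⟨σ, hσ⟩ := exists_ringEquiv_apply_ne_of_notMem_range (k := ℚ) (r := r)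
      (by simpa [Set.mem_range, eq_ratCast] using hr)
    exact hσ (hA.ringHom_apply_eq σ.toRingHom)
  · rintro ⟨q, rfl⟩
    exact exists_adequate_ratCast q
end

section
/- For every field K and every n ≥ 1, the set K̃ₙ of elements admitting an adequate set of cardinality at most n has cardinality at most (n+1)^(n²+n+1). Consequently K̃ is countable. -/
open Set

/-- The set `K̃ₙ`. -/
def adequatelyDetermined (K : Type*) [Field K] (n : ℕ) : Set K :=
  {r : K | ∃ A : Finset K, A.card ≤ n ∧ Adequate A r}

theorem Finset.exists_leftInvOn_fin {α : Type*} [Nonempty α] {n : ℕ} {A : Finset α}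
    (hA : A.card ≤ n) (r : α) (i : Fin n) :
    ∃ (e : Fin n → α) (idx : α → Fin n), LeftInvOn e idx A ∧ idx r = i := by
  have : Nonempty (Fin n) := ⟨i⟩
  obtain ⟨f, -, hf⟩ := A.finite_toSet.exists_injOn_of_encard_le (t := (Set.univ : Set (Fin n)))
    (by simpa [encard_coe_eq_coe_finsetCard] using hA)
  let idx := Equiv.swap (f r) i ∘ f
  have hidx : InjOn idx A := (Equiv.injective _).comp_injOn hf
  exact ⟨Function.invFunOn idx A, idx, hidx.leftInvOn_invFunOn, Equiv.swap_apply_left _ _⟩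

lemma card_sym2_fin_mul_two (n : ℕ) : Fintype.card (Sym2 (Fin n)) * 2 = n ^ 2 + n := by
  rw [Sym2.card, Fintype.card_fin, Nat.choose_two_right,
    Nat.div_mul_cancel (Nat.even_mul_pred_self _).two_dvd, add_tsub_cancel_right]
  ring

section PartialOpTable

variable {α : Type*} [DecidableEq α] {n : ℕ}

/-- Meant for `e` a section of `idx` on `A`; `none` marks a pair whose result leaves `A`. -/
def partialOpTable (op : α → α → α) [Std.Commutative op] (A : Finset α) (e : Fin n → α)
    (idx : α → Fin n) : Sym2 (Fin n) → Option (Fin n) :=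
  Sym2.lift ⟨fun i j => if op (e i) (e j) ∈ A then some (idx (op (e i) (e j))) else none,
    fun i j => by dsimp only; rw [Std.Commutative.comm (op := op) (e i)]⟩

theorem partialOpTable_map_op {op : α → α → α} [Std.Commutative op] {A₁ A₂ : Finset α}
    {e₁ e₂ : Fin n → α} {idx₁ idx₂ : α → Fin n} (h₁ : LeftInvOn e₁ idx₁ A₁)
    (h₂ : LeftInvOn e₂ idx₂ A₂) (h : partialOpTable op A₁ e₁ idx₁ = partialOpTable op A₂ e₂ idx₂)
    {a b : α} (ha : a ∈ A₁) (hb : b ∈ A₁) (hab : op a b ∈ A₁) :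
    e₂ (idx₁ (op a b)) = op (e₂ (idx₁ a)) (e₂ (idx₁ b)) := by
  have hab' := congrFun h s(idx₁ a, idx₁ b)
  simp only [partialOpTable, Sym2.lift_mk, h₁ ha, h₁ hb, if_pos hab] at hab'
  split_ifs at hab' with hA₂
  rw [Option.some_inj.mp hab', h₂ hA₂]

end PartialOpTable

abbrev AdequacyCode (n : ℕ) : Type :=
  (Sym2 (Fin n) → Option (Fin n)) × (Sym2 (Fin n) → Option (Fin n)) × Option (Fin n)

lemma card_adequacyCode (n : ℕ) : Nat.card (AdequacyCode n) = (n + 1) ^ (n ^ 2 + n + 1) := by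
  have hsym := card_sym2_fin_mul_two n
  simp only [Nat.card_eq_fintype_card, Fintype.card_prod, Fintype.card_fun,
    Fintype.card_option, Fintype.card_fin]
  rw [← hsym, ← pow_succ, ← pow_add]
  congr 1
  omega

section Code

variable {K : Type*} [Field K] [DecidableEq K] {n : ℕ}

def adequacyCode (A : Finset K) (e : Fin n → K) (idx : K → Fin n) : AdequacyCode n :=
  (partialOpTable (α := K) (· + ·) A e idx, partialOpTable (α := K) (· * ·) A e idx,
    if (1 : K) ∈ A then some (idx 1) else none)

theorem Adequate.eq_of_adequacyCode_eq {A₁ A₂ : Finset K} {r₁ r₂ : K} {e₁ e₂ : Fin n → K}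
    {idx₁ idx₂ : K → Fin n} {i : Fin n} (had : Adequate A₁ r₁) (hr₂ : r₂ ∈ A₂)
    (h₁ : LeftInvOn e₁ idx₁ A₁) (h₂ : LeftInvOn e₂ idx₂ A₂) (hi₁ : idx₁ r₁ = i)
    (hi₂ : idx₂ r₂ = i) (h : adequacyCode A₁ e₁ idx₁ = adequacyCode A₂ e₂ idx₂) : r₁ = r₂ := by
  simp only [adequacyCode, Prod.mk.injEq] at h
  obtain ⟨hadd, hmul, hone⟩ := h
  have hf_one : (1 : K) ∈ A₁ → e₂ (idx₁ 1) = 1 := by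
    intro h1
    rw [if_pos h1] at hone
    split_ifs at hone with h1₂
    rw [Option.some_inj.mp hone, h₂ h1₂]
  have hfix : e₂ (idx₁ r₁) = r₁ := had.2 (e₂ ∘ idx₁) hf_one
    (fun _ _ ha hb hab => partialOpTable_map_op h₁ h₂ hadd ha hb hab)
    (fun _ _ ha hb hab => partialOpTable_map_op h₁ h₂ hmul ha hb hab)
  rw [← hfix, hi₁, ← hi₂, h₂ hr₂]

end Code

theorem adequatelyDetermined_finite_and_ncard_le (K : Type*) [Field K] {n : ℕ} (i : Fin n) :
    (adequatelyDetermined K n).Finite ∧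
      (adequatelyDetermined K n).ncard ≤ (n + 1) ^ (n ^ 2 + n + 1) := by
  classical
  have hcode : ∀ r : adequatelyDetermined K n, ∃ (A : Finset K) (e : Fin n → K) (idx : K → Fin n),
      Adequate A r ∧ LeftInvOn e idx A ∧ idx r = i := by
    rintro ⟨r, A, hA, had⟩
    obtain ⟨e, idx, hinv, hi⟩ := A.exists_leftInvOn_fin hA r i
    exact ⟨A, e, idx, had, hinv, hi⟩
  choose A e idx had hinv hi using hcode
  let code : adequatelyDetermined K n → AdequacyCode n := fun r => adequacyCode (A r) (e r) (idx r)
  have hcode_inj : code.Injective := fun r s h =>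
    Subtype.ext ((had r).eq_of_adequacyCode_eq (had s).1 (hinv r) (hinv s) (hi r) (hi s) h)
  refine ⟨finite_coe_iff.mp (Finite.of_injective code hcode_inj), ?_⟩
  rw [← Nat.card_coe_set_eq, ← card_adequacyCode]
  exact Nat.card_le_card_of_injective code hcode_inj

theorem tilde_n_card_bound (K : Type*) [Field K] :
    (∀ n : ℕ, 1 ≤ n →
      ({r : K | ∃ A : Finset K, A.card ≤ n ∧ Adequate A r}).Finite ∧
      ({r : K | ∃ A : Finset K, A.card ≤ n ∧ Adequate A r}).ncard ≤
        (n + 1) ^ (n ^ 2 + n + 1)) ∧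
    ({r : K | ∃ A : Finset K, Adequate A r}).Countable := by
  refine ⟨fun n hn => adequatelyDetermined_finite_and_ncard_le K ⟨0, hn⟩, ?_⟩
  have hunion : {r : K | ∃ A : Finset K, Adequate A r} = ⋃ n, adequatelyDetermined K (n + 1) := by
    ext r
    simp only [adequatelyDetermined, mem_ofPred_eq, mem_iUnion]
    exact ⟨fun ⟨A, had⟩ => ⟨A.card, A, by omega, had⟩, fun ⟨_, A, _, had⟩ => ⟨A, had⟩⟩
  rw [hunion]
  exact countable_iUnion fun n => (adequatelyDetermined_finite_and_ncard_le K 0).1.countable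
end

section
/- Let p(x) = aₙxⁿ + ⋯ + a₁x + a₀ ∈ ℤ[x] with aₙ ≠ 0 and p(r) = 0 for some real r, and let α < r < β be rationals such that r is the only root of p in [α, β]. Then the finite set A(r) = { Σᵢ bᵢrⁱ : bᵢ ∈ ℤ, |bᵢ| ≤ a } ∪ { α, r−α, √(r−α), β, β−r, √(β−r) } (for suitably large integer a bounding the |aᵢ| and the numerators/denominators of α, β) is adequate for r: every map f : A(r) → ℝ preserving 1 and preserving sums and products lying in A(r) satisfies f(r) = r. -/
/-- The explicit finite set built from an integer polynomial vanishing at `r`,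
rational bounds `α < r < β` isolating `r`, and the square roots `√(r-α)`, `√(β-r)`,
is adequate for `r`. -/
theorem explicit_set_adequate_for_real_algebraic
    (n : ℕ) (c : Fin (n + 1) → ℤ) (hcn : c (Fin.last n) ≠ 0)
    (r : ℝ) (hroot : (∑ i : Fin (n + 1), (c i : ℝ) * r ^ (i : ℕ)) = 0)
    (α β : ℚ) (hα : (α : ℝ) < r) (hβ : r < (β : ℝ))
    (honly : ∀ x : ℝ, (α : ℝ) ≤ x → x ≤ (β : ℝ) →
      (∑ i : Fin (n + 1), (c i : ℝ) * x ^ (i : ℕ)) = 0 → x = r)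
    (k₁ k₂ l₁ l₂ : ℤ) (hk₂ : k₂ ≠ 0) (hl₂ : l₂ ≠ 0)
    (hαq : α = (k₁ : ℚ) / (k₂ : ℚ)) (hβq : β = (l₁ : ℚ) / (l₂ : ℚ))
    (a : ℤ)
    (ha : ∀ i : Fin (n + 1), |c i| ≤ a)
    (hak₁ : |k₁| ≤ a) (hak₂ : |k₂| ≤ a) (hal₁ : |l₁| ≤ a) (hal₂ : |l₂| ≤ a)
    (A : Set ℝ)
    (hA : A = {x : ℝ | ∃ b : Fin (n + 1) → ℤ, (∀ i, |b i| ≤ a) ∧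
                x = ∑ i : Fin (n + 1), (b i : ℝ) * r ^ (i : ℕ)} ∪
              {(α : ℝ), r - (α : ℝ), Real.sqrt (r - (α : ℝ)),
               (β : ℝ), (β : ℝ) - r, Real.sqrt ((β : ℝ) - r)}) :
    ∀ f : ℝ → ℝ,
      ((1 : ℝ) ∈ A → f 1 = 1) →
      (∀ x y : ℝ, x ∈ A → y ∈ A → x + y ∈ A → f (x + y) = f x + f y) →
      (∀ x y : ℝ, x ∈ A → y ∈ A → x * y ∈ A → f (x * y) = f x * f y) →
      f r = r := by
  intro f h1 hadd hmul
  rcases n with _ | n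
  · -- degenerate case: constant polynomial, contradiction
    simp [Fin.sum_univ_one] at hroot
    exact absurd (by exact_mod_cast hroot) (by simpa [Fin.last] using hcn)
  -- now working in Fin (n + 2)
  have ha1 : (1 : ℤ) ≤ a := le_trans (Int.one_le_abs hcn) (ha _)
  have memPoly : ∀ b : Fin (n+2) → ℤ, (∀ i, |b i| ≤ a) →
      (∑ i : Fin (n+2), (b i : ℝ) * r ^ (i:ℕ)) ∈ A := by
    intro b hb
    rw [hA]; exact Or.inl ⟨b, hb, rfl⟩
  have single_eq : ∀ (j : Fin (n+2)) (m : ℤ),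
      (∑ i : Fin (n+2), ((if i = j then m else 0 : ℤ) : ℝ) * r ^ (i:ℕ)) = m * r ^ (j:ℕ) := by
    intro j m
    rw [Finset.sum_eq_single j] <;> simp +contextual
  have memSingle : ∀ (j : Fin (n+2)) (m : ℤ), |m| ≤ a → ((m:ℝ) * r ^ (j:ℕ)) ∈ A := by
    intro j m hm
    have := memPoly (fun i => if i = j then m else 0) (by
      intro i; by_cases h : i = j <;> simp [h] <;> omega)
    rwa [single_eq j m] at this
  have memInt : ∀ m : ℤ, |m| ≤ a → ((m:ℝ)) ∈ A := by
    intro m hm; simpa using memSingle 0 m hm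
  have memPow : ∀ j : Fin (n+2), (r ^ (j:ℕ)) ∈ A := by
    intro j; simpa using memSingle j 1 (by simpa using ha1)
  have memr : r ∈ A := by simpa using memPow 1
  have mem0 : (0:ℝ) ∈ A := by simpa using memInt 0 (by simpa using le_trans zero_le_one ha1)
  have mem1 : (1:ℝ) ∈ A := by simpa using memInt 1 (by simpa using ha1)
  have memα : ((α:ℚ):ℝ) ∈ A := by rw [hA]; exact Or.inr (by simp)
  have memβ : ((β:ℚ):ℝ) ∈ A := by rw [hA]; exact Or.inr (by simp)
  have memrα : (r - (α:ℝ)) ∈ A := by rw [hA]; exact Or.inr (by simp)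
  have memβr : ((β:ℝ) - r) ∈ A := by rw [hA]; exact Or.inr (by simp)
  have memsα : Real.sqrt (r - (α:ℝ)) ∈ A := by rw [hA]; exact Or.inr (by simp)
  have memsβ : Real.sqrt ((β:ℝ) - r) ∈ A := by rw [hA]; exact Or.inr (by simp)
  have hf1 : f 1 = 1 := h1 mem1
  have hf0 : f 0 = 0 := by
    have h := hadd 0 0 mem0 mem0 (by simpa using mem0)
    norm_num at h; linarith
  have hfnat : ∀ m : ℕ, (m:ℤ) ≤ a → f (m:ℝ) = m := by
    intro m
    induction m with
    | zero => intro _; simpa using hf0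
    | succ k ih =>
      intro hk
      have hk' : (k:ℤ) ≤ a := by omega
      have habs : |(k:ℤ)| ≤ a := by simpa using hk'
      have habs' : |((k:ℤ)+1)| ≤ a := by rw [abs_of_nonneg (by positivity)]; omega
      have h := hadd (k:ℝ) 1 (by simpa using memInt k habs) mem1
        (by have := memInt ((k:ℤ)+1) habs'; push_cast at this ⊢; convert this using 2)
      push_cast
      rw [h, ih hk', hf1]
  have hfint : ∀ m : ℤ, |m| ≤ a → f (m:ℝ) = m := by
    have hnn : ∀ m : ℤ, 0 ≤ m → |m| ≤ a → f (m:ℝ) = m := by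
      intro m hm0 hm
      lift m to ℕ using hm0
      exact_mod_cast hfnat m (by simpa using hm)
    intro m hm
    rcases le_or_gt 0 m with hm0 | hm0
    · exact hnn m hm0 hm
    · have hmem : (-(m:ℝ)) ∈ A := by
        have := memInt (-m) (by simpa using hm); push_cast at this; exact this
      have h := hadd (m:ℝ) (-(m:ℝ)) (memInt m hm) hmem (by simpa using mem0)
      have h2 : f (-(m:ℝ)) = (-m : ℤ) := by
        have := hnn (-m) (by omega) (by simpa using hm)
        push_cast at this ⊢; exact this
      simp at h
      rw [hf0] at h
      push_cast at h2 ⊢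
      linarith
  have hfpow : ∀ k : ℕ, k ≤ n+1 → f (r ^ k) = (f r) ^ k := by
    intro k
    induction k with
    | zero => intro _; simpa using hf1
    | succ m ih =>
      intro hm
      have h := hmul (r ^ m) r (by simpa using memPow ⟨m, by omega⟩) memr
        (by have := memPow ⟨m+1, by omega⟩; simpa [pow_succ] using this)
      rw [pow_succ, h, ih (by omega), pow_succ]
  -- the truncated coefficient function
  set c' : ℕ → ℤ := fun i => if h : i < n+2 then c ⟨i,h⟩ else 0 with hc'
  have hc'bound : ∀ i : ℕ, |c' i| ≤ a := by
    intro i; by_cases h : i < n+2 <;> simp [hc', h] <;> [exact ha _; omega]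
  have conv : ∀ x : ℝ, (∑ i : Fin (n+2), (c i : ℝ) * x ^ (i:ℕ)) =
      ∑ i ∈ Finset.range (n+2), (c' i : ℝ) * x ^ i := by
    intro x
    rw [← Fin.sum_univ_eq_sum_range (fun i => ((c' i : ℤ) : ℝ) * x ^ i)]
    exact Finset.sum_congr rfl fun i _ => by simp [hc', i.isLt]
  have hSmem : ∀ k : ℕ, k ≤ n+2 → (∑ i ∈ Finset.range k, (c' i:ℝ) * r ^ i) ∈ A := by
    intro k hk
    have heq : (∑ i ∈ Finset.range k, (c' i : ℝ) * r ^ i) =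
        ∑ i : Fin (n+2), ((if (i:ℕ) < k then c' i else 0 : ℤ) : ℝ) * r ^ (i:ℕ) := by
      rw [Fin.sum_univ_eq_sum_range (fun i => ((if i < k then c' i else 0 : ℤ) : ℝ) * r ^ i)]
      rw [← Finset.sum_subset (Finset.range_subset_range.2 hk)
        (by simp +contextual [Finset.mem_range])]
      exact Finset.sum_congr rfl (by simp +contextual [Finset.mem_range])
    rw [heq]
    refine memPoly _ (fun i => ?_)
    by_cases h : (i:ℕ) < k <;> simp [h] <;> [exact hc'bound _; omega]
  have hfS : ∀ k : ℕ, k ≤ n+2 → f (∑ i ∈ Finset.range k, (c' i:ℝ) * r ^ i) =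
      ∑ i ∈ Finset.range k, (c' i:ℝ) * (f r) ^ i := by
    intro k
    induction k with
    | zero => intro _; simpa using hf0
    | succ m ih =>
      intro hm
      have hterm : f ((c' m : ℝ) * r ^ m) = (c' m : ℝ) * (f r) ^ m := by
        have h := hmul (c' m : ℝ) (r ^ m) (memInt _ (hc'bound m))
          (by simpa using memPow ⟨m, by omega⟩)
          (by simpa using memSingle ⟨m, by omega⟩ (c' m) (hc'bound m))
        rw [h, hfint _ (hc'bound m), hfpow m (by omega)]
      have h := hadd _ _ (hSmem m (by omega)) (memSingle ⟨m, by omega⟩ (c' m) (hc'bound m))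
        (by rw [← Finset.sum_range_succ (fun i => (c' i:ℝ) * r ^ i)]; exact hSmem (m+1) hm)
      rw [Finset.sum_range_succ, Finset.sum_range_succ]
      simp only at h
      rw [h, ih (by omega), hterm]
  -- f r is a root
  have hroot' : (∑ i : Fin (n+2), (c i : ℝ) * (f r) ^ (i:ℕ)) = 0 := by
    rw [conv (f r), ← hfS (n+2) le_rfl, ← conv r, hroot, hf0]
  -- f α = α, f β = β
  have hfα : f ((α:ℚ):ℝ) = (α:ℝ) := by
    have hk : ((α:ℚ):ℝ) * (k₂:ℝ) = (k₁:ℝ) := by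
      rw [hαq]; push_cast; field_simp
    have h := hmul ((α:ℚ):ℝ) (k₂:ℝ) memα (memInt k₂ hak₂) (by rw [hk]; exact memInt k₁ hak₁)
    rw [hk, hfint k₁ hak₁, hfint k₂ hak₂] at h
    have hk2 : (k₂:ℝ) ≠ 0 := Int.cast_ne_zero.2 hk₂
    have hαr : ((α:ℚ):ℝ) = (k₁:ℝ) / (k₂:ℝ) := by rw [hαq]; push_cast; ring
    have hval : f ((α:ℚ):ℝ) = (k₁:ℝ)/(k₂:ℝ) := by rw [eq_div_iff hk2]; linarith
    rw [hval]; exact hαr.symm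
  have hfβ : f ((β:ℚ):ℝ) = (β:ℝ) := by
    have hk : ((β:ℚ):ℝ) * (l₂:ℝ) = (l₁:ℝ) := by
      rw [hβq]; push_cast; field_simp
    have h := hmul ((β:ℚ):ℝ) (l₂:ℝ) memβ (memInt l₂ hal₂) (by rw [hk]; exact memInt l₁ hal₁)
    rw [hk, hfint l₁ hal₁, hfint l₂ hal₂] at h
    have hl2 : (l₂:ℝ) ≠ 0 := Int.cast_ne_zero.2 hl₂
    have hβr : ((β:ℚ):ℝ) = (l₁:ℝ) / (l₂:ℝ) := by rw [hβq]; push_cast; ring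
    have hval : f ((β:ℚ):ℝ) = (l₁:ℝ)/(l₂:ℝ) := by rw [eq_div_iff hl2]; linarith
    rw [hval]; exact hβr.symm
  -- bounds
  have hrα0 : (0:ℝ) ≤ r - (α:ℝ) := by linarith
  have hβr0 : (0:ℝ) ≤ (β:ℝ) - r := by linarith
  have hfrα : 0 ≤ f (r - (α:ℝ)) := by
    have hss : Real.sqrt (r - (α:ℝ)) * Real.sqrt (r - (α:ℝ)) = r - (α:ℝ) :=
      Real.mul_self_sqrt hrα0
    have h := hmul _ _ memsα memsα (by rw [hss]; exact memrα)
    rw [hss] at h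
    rw [h]; exact mul_self_nonneg _
  have hfβr : 0 ≤ f ((β:ℝ) - r) := by
    have hss : Real.sqrt ((β:ℝ) - r) * Real.sqrt ((β:ℝ) - r) = (β:ℝ) - r :=
      Real.mul_self_sqrt hβr0
    have h := hmul _ _ memsβ memsβ (by rw [hss]; exact memβr)
    rw [hss] at h
    rw [h]; exact mul_self_nonneg _
  have hlow : (α:ℝ) ≤ f r := by
    have h := hadd (r - (α:ℝ)) ((α:ℚ):ℝ) memrα memα
      (by have : r - (α:ℝ) + (α:ℝ) = r := by ring
          rw [this]; exact memr)
    have he : r - (α:ℝ) + (α:ℝ) = r := by ring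
    rw [he, hfα] at h
    linarith
  have hhigh : f r ≤ (β:ℝ) := by
    have h := hadd ((β:ℝ) - r) r memβr memr
      (by have : (β:ℝ) - r + r = (β:ℝ) := by ring
          rw [this]; exact memβ)
    have he : (β:ℝ) - r + r = (β:ℝ) := by ring
    rw [he, hfβ] at h
    linarith
  exact honly (f r) hlow hhigh hroot'
end

section
/- Every real algebraic number r belongs to ℝ̃, i.e., admits a finite adequate set in ℝ. -/
open Finset Polynomial

lemma fix_int {A : Finset ℝ} {f : ℝ → ℝ}
    (hadd : ∀ a b : ℝ, a ∈ A → b ∈ A → a + b ∈ A → f (a + b) = f a + f b)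
    {B : ℤ} (hB : 1 ≤ B)
    (hsub : ∀ k : ℤ, k ∈ Finset.Icc (-B) B → (k : ℝ) ∈ A)
    (h1 : f 1 = 1) :
    ∀ k : ℤ, k ∈ Finset.Icc (-B) B → f (k : ℝ) = k := by
  have m0 : (0 : ℝ) ∈ A := by simpa using hsub 0 (by simp; omega)
  have hf0 : f 0 = 0 := by
    have := hadd 0 0 m0 m0 (by simpa using m0)
    simp at this; linarith
  have hmem : ∀ m : ℤ, -B ≤ m → m ≤ B → (m : ℝ) ∈ A := fun m h1 h2 =>
    hsub m (by simp [h1, h2])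
  have hnat : ∀ m : ℕ, (m : ℤ) ≤ B → f (m : ℝ) = m := by
    intro m
    induction m with
    | zero => intro _; simpa using hf0
    | succ k ih =>
      intro hk
      have hk' : (k : ℤ) ≤ B := by omega
      have e1 : ((k : ℝ) + 1) = ((k + 1 : ℕ) : ℝ) := by push_cast; ring
      have := hadd (k : ℝ) 1 (by exact_mod_cast hmem k (by omega) hk')
        (by exact_mod_cast hmem 1 (by omega) hB)
        (by rw [e1]; exact_mod_cast hmem (k+1) (by omega) (by omega))
      rw [e1] at this
      rw [this, ih hk', h1]; push_cast; ring
  have hneg : ∀ m : ℕ, (m : ℤ) ≤ B → f (-(m : ℝ)) = -m := by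
    intro m hm
    have := hadd (-(m : ℝ)) (m : ℝ)
      (by exact_mod_cast hmem (-(m:ℤ)) (by omega) (by omega))
      (by exact_mod_cast hmem m (by omega) hm)
      (by simpa using m0)
    simp at this
    rw [hnat m hm] at this
    linarith
  intro k hk
  simp at hk
  rcases le_or_gt 0 k with h | h
  · lift k to ℕ using h
    exact_mod_cast hnat k hk.2
  · obtain ⟨m, rfl⟩ : ∃ m : ℕ, k = -(m : ℤ) := ⟨k.natAbs, by omega⟩
    push_cast
    exact_mod_cast hneg m (by omega)

lemma fix_rat {A : Finset ℝ} {f : ℝ → ℝ}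
    (hmul : ∀ a b : ℝ, a ∈ A → b ∈ A → a * b ∈ A → f (a * b) = f a * f b)
    (c : ℚ) (hcA : (c : ℝ) ∈ A) (hdA : ((c.den : ℤ) : ℝ) ∈ A) (hnA : ((c.num : ℤ) : ℝ) ∈ A)
    (hnum : f ((c.num : ℤ) : ℝ) = ((c.num : ℤ) : ℝ))
    (hden : f ((c.den : ℤ) : ℝ) = ((c.den : ℤ) : ℝ)) :
    f (c : ℝ) = c := by
  have hden0 : ((c.den : ℤ) : ℝ) ≠ 0 := by exact_mod_cast (Nat.cast_ne_zero (R := ℤ)).2 c.den_nz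
  have key : (c : ℝ) * ((c.den : ℤ) : ℝ) = ((c.num : ℤ) : ℝ) := by
    rw [Rat.cast_def]; push_cast; field_simp
  have := hmul (c : ℝ) ((c.den : ℤ) : ℝ) hcA hdA (by rw [key]; exact hnA)
  rw [key, hnum, hden] at this
  have hc : (c : ℝ) = ((c.num : ℤ) : ℝ) / ((c.den : ℤ) : ℝ) := by
    rw [Rat.cast_def]; push_cast; ring
  have h2 : f (c : ℝ) * ((c.den : ℤ) : ℝ) = (c : ℝ) * ((c.den : ℤ) : ℝ) := by
    rw [key]; linarith
  exact mul_right_cancel₀ hden0 h2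

lemma pos_of_sq {A : Finset ℝ} {f : ℝ → ℝ}
    (hmul : ∀ a b : ℝ, a ∈ A → b ∈ A → a * b ∈ A → f (a * b) = f a * f b)
    (x : ℝ) (hx : 0 < x) (hxA : x ∈ A) (hsA : Real.sqrt x ∈ A) (hiA : x⁻¹ ∈ A)
    (h1A : (1 : ℝ) ∈ A) (hf1 : f 1 = 1) :
    0 < f x := by
  have hsq : Real.sqrt x * Real.sqrt x = x := Real.mul_self_sqrt hx.le
  have h2 : f x = f (Real.sqrt x) * f (Real.sqrt x) := by
    have := hmul _ _ hsA hsA (by rwa [hsq])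
    rwa [hsq] at this
  have hinv : x * x⁻¹ = 1 := mul_inv_cancel₀ hx.ne'
  have h3 : f x * f x⁻¹ = 1 := by
    have := hmul x x⁻¹ hxA hiA (by rwa [hinv])
    rw [hinv, hf1] at this
    exact this.symm
  have hne : f x ≠ 0 := fun h => by simp [h] at h3
  rcases lt_or_ge 0 (f x) with h | h
  · exact h
  · exfalso
    have hlt : f x < 0 := lt_of_le_of_ne h hne
    nlinarith [mul_self_nonneg (f (Real.sqrt x))]

/-- Every real algebraic number admits a finite adequate set. -/
theorem real_algebraic_mem_tilde (r : ℝ) (hr : IsAlgebraic ℚ r) :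
    ∃ A : Finset ℝ, Adequate A r := by
  have hri : IsIntegral ℚ r := hr.isIntegral
  set p : Polynomial ℚ := minpoly ℚ r with hp
  have hp0 : p ≠ 0 := minpoly.ne_zero hri
  set n := p.natDegree with hn
  set c : ℕ → ℝ := fun k => ((p.coeff k : ℚ) : ℝ) with hc
  set S : ℕ → ℝ := fun j => ∑ k ∈ Finset.range (j+1), c k * r ^ k with hS
  set P : Polynomial ℝ := p.map (algebraMap ℚ ℝ) with hP
  have hP0 : P ≠ 0 := (Polynomial.map_ne_zero_iff (algebraMap ℚ ℝ).injective).2 hp0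
  have hPeval : ∀ y : ℝ, P.eval y = ∑ k ∈ Finset.range (n+1), c k * y ^ k := by
    intro y
    rw [hP, Polynomial.eval_map, ← Polynomial.aeval_def, Polynomial.aeval_eq_sum_range]
    simp only [hc, Rat.smul_def, ← hn]
  have hSn : S n = 0 := by
    have h := minpoly.aeval ℚ r
    rw [Polynomial.aeval_eq_sum_range] at h
    simp only [hS, hc, Rat.smul_def, ← hn, ← hp] at h ⊢
    exact h
  have hrroot : P.eval r = 0 := by rw [hPeval]; simpa [hS] using hSn
  -- choose an interval around r free of other roots
  set T : Finset ℝ := P.roots.toFinset.erase r with hT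
  set δ : ℝ := if h : T.Nonempty then T.inf' h (fun s => |s - r|) else 1 with hδ
  have hδpos : 0 < δ := by
    rw [hδ]; split_ifs with h
    · rw [Finset.lt_inf'_iff]
      intro s hs
      exact abs_pos.2 (sub_ne_zero.2 (Finset.ne_of_mem_erase hs))
    · norm_num
  obtain ⟨q, hq1, hq2⟩ := exists_rat_btwn (show r - δ < r by linarith)
  obtain ⟨q', hq'1, hq'2⟩ := exists_rat_btwn (show r < r + δ by linarith)
  have huniq : ∀ s : ℝ, P.eval s = 0 → (q : ℝ) < s → s < (q' : ℝ) → s = r := by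
    intro s hs h1 h2
    by_contra hne
    have hsT : s ∈ T := by
      rw [hT]
      exact Finset.mem_erase.2 ⟨hne, by
        rw [Multiset.mem_toFinset, Polynomial.mem_roots hP0]; exact hs⟩
    have hle : δ ≤ |s - r| := by
      rw [hδ, dif_pos ⟨s, hsT⟩]; exact Finset.inf'_le _ hsT
    have : |s - r| < δ := abs_lt.2 ⟨by linarith, by linarith⟩
    linarith
  set x : ℝ := r - (q : ℝ) with hx
  set x' : ℝ := (q' : ℝ) - r with hx'
  have hxpos : 0 < x := by rw [hx]; linarith
  have hx'pos : 0 < x' := by rw [hx']; linarith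
  -- the integer bound
  set Bc : ℤ := (Finset.range (n+1)).sup' (by simp) (fun k => max |(p.coeff k).num| ((p.coeff k).den : ℤ)) with hBc
  set B : ℤ := max 1 (max (max |q.num| (q.den : ℤ)) (max (max |q'.num| (q'.den : ℤ)) Bc)) with hB
  have hB1 : (1 : ℤ) ≤ B := le_max_left _ _
  -- the adequate set
  set A : Finset ℝ :=
    ((Finset.Icc (-B) B).image (fun k : ℤ => (k : ℝ))) ∪
    ((Finset.range (n+1)).image c) ∪
    ((Finset.range (n+1)).image (fun k => r ^ k)) ∪
    ((Finset.range (n+1)).image (fun k => c k * r ^ k)) ∪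
    ((Finset.range (n+1)).image S) ∪
    {(q : ℝ), (q' : ℝ), r, x, x', Real.sqrt x, Real.sqrt x', x⁻¹, x'⁻¹} with hA
  have hmInt : ∀ k : ℤ, k ∈ Finset.Icc (-B) B → ((k : ℤ) : ℝ) ∈ A := by
    intro k hk
    rw [hA]; simp only [Finset.mem_union]
    exact Or.inl (Or.inl (Or.inl (Or.inl (Or.inl (Finset.mem_image_of_mem _ hk)))))
  have hmC : ∀ k, k ∈ Finset.range (n+1) → c k ∈ A := by
    intro k hk
    rw [hA]; simp only [Finset.mem_union]
    exact Or.inl (Or.inl (Or.inl (Or.inl (Or.inr (Finset.mem_image_of_mem _ hk)))))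
  have hmPow : ∀ k, k ∈ Finset.range (n+1) → r ^ k ∈ A := by
    intro k hk
    rw [hA]; simp only [Finset.mem_union]
    exact Or.inl (Or.inl (Or.inl (Or.inr (Finset.mem_image_of_mem _ hk))))
  have hmCk : ∀ k, k ∈ Finset.range (n+1) → c k * r ^ k ∈ A := by
    intro k hk
    rw [hA]; simp only [Finset.mem_union]
    exact Or.inl (Or.inl (Or.inr (Finset.mem_image_of_mem _ hk)))
  have hmS : ∀ k, k ∈ Finset.range (n+1) → S k ∈ A := by
    intro k hk
    rw [hA]; simp only [Finset.mem_union]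
    exact Or.inl (Or.inr (Finset.mem_image_of_mem _ hk))
  have hmLast : ∀ y : ℝ, y ∈ ({(q : ℝ), (q' : ℝ), r, x, x', Real.sqrt x, Real.sqrt x', x⁻¹, x'⁻¹} : Finset ℝ) → y ∈ A := by
    intro y hy
    rw [hA]; simp only [Finset.mem_union]
    exact Or.inr hy
  have hm_q : (q : ℝ) ∈ A := hmLast _ (by simp)
  have hm_q' : (q' : ℝ) ∈ A := hmLast _ (by simp)
  have hm_r : r ∈ A := hmLast _ (by simp)
  have hm_x : x ∈ A := hmLast _ (by simp)
  have hm_x' : x' ∈ A := hmLast _ (by simp)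
  have hm_sx : Real.sqrt x ∈ A := hmLast _ (by simp)
  have hm_sx' : Real.sqrt x' ∈ A := hmLast _ (by simp)
  have hm_ix : x⁻¹ ∈ A := hmLast _ (by simp)
  have hm_ix' : x'⁻¹ ∈ A := hmLast _ (by simp)
  have hm_1 : (1 : ℝ) ∈ A := by
    have := hmInt 1 (by simp [Finset.mem_Icc]; omega)
    simpa using this
  refine ⟨A, hm_r, ?_⟩
  intro f h1 hadd hmul
  have hf1 : f 1 = 1 := h1 hm_1
  have hfint := fix_int hadd hB1 hmInt hf1
  have hf0 : f 0 = 0 := by simpa using hfint 0 (by simp [Finset.mem_Icc]; omega)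
  have hfrat : ∀ d : ℚ, (d : ℝ) ∈ A → |d.num| ≤ B → (d.den : ℤ) ≤ B → f (d : ℝ) = d := by
    intro d hdA hb1 hb2
    have hmemn : (d.num : ℤ) ∈ Finset.Icc (-B) B := by
      rw [Finset.mem_Icc]; exact abs_le.1 hb1
    have hmemd : ((d.den : ℤ) : ℤ) ∈ Finset.Icc (-B) B := by
      rw [Finset.mem_Icc]
      have h0 : (0 : ℤ) ≤ (d.den : ℤ) := Int.natCast_nonneg _
      exact ⟨by linarith, hb2⟩
    exact fix_rat hmul d hdA (hmInt _ hmemd) (hmInt _ hmemn)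
      (hfint _ hmemn) (hfint _ hmemd)
  -- bounds
  have habsq : |q.num| ≤ B := by
    rw [hB]; simp only [le_max_iff, le_refl, true_or, or_true]
  have hdenq : (q.den : ℤ) ≤ B := by
    rw [hB]; simp only [le_max_iff, le_refl, true_or, or_true]
  have habsq' : |q'.num| ≤ B := by
    rw [hB]; simp only [le_max_iff, le_refl, true_or, or_true]
  have hdenq' : (q'.den : ℤ) ≤ B := by
    rw [hB]; simp only [le_max_iff, le_refl, true_or, or_true]
  have hcoefb : ∀ k, k ∈ Finset.range (n+1) →
      |(p.coeff k).num| ≤ B ∧ ((p.coeff k).den : ℤ) ≤ B := by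
    intro k hk
    have h := Finset.le_sup' (f := fun k => max |(p.coeff k).num| ((p.coeff k).den : ℤ)) hk
    rw [← hBc] at h
    have hBcB : Bc ≤ B := by
      rw [hB]; simp only [le_max_iff, le_refl, true_or, or_true]
    simp only [max_le_iff] at h
    exact ⟨le_trans h.1 hBcB, le_trans h.2 hBcB⟩
  have hfq : f (q : ℝ) = q := hfrat q hm_q habsq hdenq
  have hfq' : f (q' : ℝ) = q' := hfrat q' hm_q' habsq' hdenq'
  have hfc : ∀ k, k ∈ Finset.range (n+1) → f (c k) = c k := by
    intro k hk
    obtain ⟨hb1, hb2⟩ := hcoefb k hk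
    exact hfrat (p.coeff k) (hmC k hk) hb1 hb2
  -- powers
  have hfpow : ∀ k, k ∈ Finset.range (n+1) → f (r ^ k) = (f r) ^ k := by
    intro k
    induction k with
    | zero => intro _; simpa using hf1
    | succ m ih =>
      intro hk
      have hm : m ∈ Finset.range (n+1) := by simp at hk ⊢; omega
      have e : r ^ m * r = r ^ (m+1) := (pow_succ r m).symm
      have := hmul (r ^ m) r (hmPow m hm) hm_r (by rw [e]; exact hmPow _ hk)
      rw [e] at this
      rw [this, ih hm, pow_succ]
  have hfck : ∀ k, k ∈ Finset.range (n+1) → f (c k * r ^ k) = c k * (f r) ^ k := by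
    intro k hk
    have := hmul (c k) (r ^ k) (hmC k hk) (hmPow k hk) (hmCk k hk)
    rw [this, hfc k hk, hfpow k hk]
  have hfS : ∀ j, j ∈ Finset.range (n+1) →
      f (S j) = ∑ k ∈ Finset.range (j+1), c k * (f r) ^ k := by
    intro j
    induction j with
    | zero =>
      intro hj
      have e : S 0 = c 0 * r ^ 0 := by simp [hS]
      rw [e, hfck 0 hj, Finset.sum_range_one]
    | succ m ih =>
      intro hj
      have hm : m ∈ Finset.range (n+1) := by simp at hj ⊢; omega
      have e : S m + c (m+1) * r ^ (m+1) = S (m+1) := by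
        simp [hS, Finset.sum_range_succ]
      have := hadd (S m) (c (m+1) * r ^ (m+1)) (hmS m hm) (hmCk (m+1) hj)
        (by rw [e]; exact hmS _ hj)
      rw [e] at this
      rw [this, ih hm, hfck (m+1) hj, Finset.sum_range_succ (n := m+1)]
  have key : ∑ k ∈ Finset.range (n+1), c k * (f r) ^ k = 0 := by
    have h := hfS n (by simp)
    rw [hSn, hf0] at h
    exact h.symm
  have hfr_root : P.eval (f r) = 0 := by rw [hPeval]; exact key
  -- positivity
  have hfx : 0 < f x := pos_of_sq hmul x hxpos hm_x hm_sx hm_ix hm_1 hf1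
  have hfx' : 0 < f x' := pos_of_sq hmul x' hx'pos hm_x' hm_sx' hm_ix' hm_1 hf1
  have hlow : (q : ℝ) < f r := by
    have e : (q : ℝ) + x = r := by rw [hx]; ring
    have := hadd (q : ℝ) x hm_q hm_x (by rw [e]; exact hm_r)
    rw [e, hfq] at this
    linarith
  have hhigh : f r < (q' : ℝ) := by
    have e : r + x' = (q' : ℝ) := by rw [hx']; ring
    have := hadd r x' hm_r hm_x' (by rw [e]; exact hm_q')
    rw [e, hfq'] at this
    linarith
  exact huniq (f r) hfr_root hlow hhigh
end

section
/- For x ∈ ℚ₂: |x|₂ ≤ 1 if and only if there exists y ∈ ℚ₂ with 1 + 2·x³ = y³. -/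
/-!
For a `2`-adic integer `x`, the polynomial `F(Y) = Y³ - (1 + 2x³)` has `F(1) = -2x³ ≡ 0 mod 2`
and `F'(1) = 3` a unit, so Hensel's lemma lifts the approximate root `1` to a root.
If `|x|₂ > 1`, then `1 + 2x³` has the valuation `1 + 3 v(x)` of `2x³`, which is not a multiple
of `3`, whereas every cube has valuation divisible by `3`.
-/

open Polynomial

namespace PadicInt

variable {p : ℕ} [Fact p.Prime]

theorem exists_pow_eq_one_add_of_norm_lt_sq {n : ℕ} {z : ℤ_[p]}
    (hz : ‖z‖ < ‖(n : ℤ_[p])‖ ^ 2) :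
    ∃ y : ℤ_[p], y ^ n = 1 + z := by
  have hval : (X ^ n - C (1 + z)).aeval (1 : ℤ_[p]) = -z := by simp
  have hderiv : (X ^ n - C (1 + z)).derivative.aeval (1 : ℤ_[p]) = (n : ℤ_[p]) := by
    simp [derivative_X_pow]
  obtain ⟨y, hy, -⟩ :=
    hensels_lemma (F := X ^ n - C (1 + z)) (a := 1) (by rwa [hval, hderiv, norm_neg])
  exact ⟨y, by simpa [sub_eq_zero] using hy⟩

theorem exists_pow_eq_one_add_p_mul {n : ℕ} (hn : p.Coprime n) (z : ℤ_[p]) :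
    ∃ y : ℤ_[p], y ^ n = 1 + p * z := by
  refine exists_pow_eq_one_add_of_norm_lt_sq ?_
  calc ‖(p : ℤ_[p]) * z‖ ≤ ‖(p : ℤ_[p])‖ := by
        rw [norm_mul]; exact mul_le_of_le_one_right (norm_nonneg _) (norm_le_one z)
    _ < 1 := norm_natCast_lt_one_iff.2 dvd_rfl
    _ = ‖(n : ℤ_[p])‖ ^ 2 := by rw [norm_natCast_eq_one_iff.2 hn, one_pow]

end PadicInt

namespace Padic

variable {p : ℕ} [Fact p.Prime]

theorem valuation_one_add_of_valuation_neg {a : ℚ_[p]} (ha : a.valuation < 0) :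
    (1 + a).valuation = a.valuation := by
  have ha0 : a ≠ 0 := by rintro rfl; simp at ha
  have h1 : 1 < ‖a‖ := not_le.1 fun h ↦ ha.not_ge ((norm_le_one_iff_val_nonneg a).1 h)
  have hnorm : ‖1 + a‖ = ‖a‖ := by
    rw [add_eq_max_of_ne (by rw [norm_one]; exact h1.ne), norm_one, max_eq_right h1.le]
  have h1a : 1 + a ≠ 0 := norm_ne_zero_iff.1 (hnorm ▸ norm_ne_zero_iff.2 ha0)
  have hp : (1 : ℝ) < p := mod_cast (Fact.out : p.Prime).one_lt
  rwa [norm_eq_zpow_neg_valuation h1a, norm_eq_zpow_neg_valuation ha0,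
    zpow_right_inj₀ (by positivity) hp.ne', neg_inj] at hnorm

theorem pow_ne_one_add_of_valuation_neg {n : ℕ} {a : ℚ_[p]} (ha : a.valuation < 0)
    (hn : ¬(n : ℤ) ∣ a.valuation) (y : ℚ_[p]) : y ^ n ≠ 1 + a := by
  intro hy
  apply hn
  rw [← valuation_one_add_of_valuation_neg ha, ← hy, valuation_pow]
  exact dvd_mul_right _ _

end Padic

/-- For `x ∈ ℚ₂`: `|x|₂ ≤ 1` iff `1 + 2 x³` is a cube. -/
theorem padic_two_int_iff_one_add_two_cube_is_cube (x : ℚ_[2]) :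
    ‖x‖ ≤ 1 ↔ ∃ y : ℚ_[2], 1 + 2 * x ^ 3 = y ^ 3 := by
  constructor
  · intro hx
    obtain ⟨y, hy⟩ := PadicInt.exists_pow_eq_one_add_p_mul (p := 2) (n := 3) (by norm_num)
      (⟨x, hx⟩ ^ 3 : ℤ_[2])
    have hy' := congrArg ((↑) : ℤ_[2] → ℚ_[2]) hy
    push_cast at hy'
    exact ⟨y, hy'.symm⟩
  · rintro ⟨y, hy⟩
    by_contra hx
    have hv : x.valuation < 0 := by simpa [Padic.norm_le_one_iff_val_nonneg] using hx
    have hx0 : x ≠ 0 := by rintro rfl; simp at hv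
    have h2x : (2 * x ^ 3).valuation = 1 + 3 * x.valuation := by
      rw [Padic.valuation_mul two_ne_zero (pow_ne_zero 3 hx0), Padic.valuation_pow]
      simp
    exact Padic.pow_ne_one_add_of_valuation_neg (n := 3) (by omega) (by omega) y hy.symm
end

section
/- Every element r ∈ ℚ_p that is algebraic over ℚ belongs to (ℚ_p)~, i.e., admits a finite adequate set in ℚ_p. -/
open Finset

structure IsPartialHomOn {K : Type*} [Ring K] (A : Finset K) (f : K → K) : Prop where
  map_one : (1 : K) ∈ A → f 1 = 1
  map_add : ∀ a b, a ∈ A → b ∈ A → a + b ∈ A → f (a + b) = f a + f b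
  map_mul : ∀ a b, a ∈ A → b ∈ A → a * b ∈ A → f (a * b) = f a * f b

theorem adequate_iff {K : Type*} [Field K] {A : Finset K} {r : K} :
    Adequate A r ↔ r ∈ A ∧ ∀ f, IsPartialHomOn A f → f r = r :=
  and_congr_right fun _ =>
    ⟨fun h f hf => h f hf.map_one hf.map_add hf.map_mul, fun h f h₁ h₂ h₃ => h f ⟨h₁, h₂, h₃⟩⟩

section Ring

variable {K : Type*} [Ring K] {A B : Finset K} {f : K → K}

theorem IsPartialHomOn.mono (hf : IsPartialHomOn A f) (hBA : B ⊆ A) : IsPartialHomOn B f :=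
  ⟨fun h => hf.map_one (hBA h), fun a b ha hb hab => hf.map_add a b (hBA ha) (hBA hb) (hBA hab),
    fun a b ha hb hab => hf.map_mul a b (hBA ha) (hBA hb) (hBA hab)⟩

theorem IsPartialHomOn.map_zero (hf : IsPartialHomOn A f) (h₀ : (0 : K) ∈ A) : f 0 = 0 := by
  have h := hf.map_add 0 0 h₀ h₀ (by rwa [add_zero])
  rwa [add_zero, left_eq_add] at h

variable [DecidableEq K]

variable (K) in
noncomputable def intRange (M : ℕ) : Finset K :=
  (Icc (-M : ℤ) M).image (↑)

theorem intCast_mem_intRange {M : ℕ} {k : ℤ} (hk : k.natAbs ≤ M) : (k : K) ∈ intRange K M :=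
  mem_image.2 ⟨k, mem_Icc.2 (by omega), rfl⟩

theorem natCast_mem_intRange {M n : ℕ} (hn : n ≤ M) : (n : K) ∈ intRange K M := by
  exact_mod_cast intCast_mem_intRange (K := K) (k := n) (by omega)

theorem IsPartialHomOn.map_natCast (hf : IsPartialHomOn A f) {M : ℕ} (hA : intRange K M ⊆ A)
    {n : ℕ} (hn : n ≤ M) : f n = n := by
  have mem {k : ℕ} (hk : k ≤ M) : (k : K) ∈ A := hA (natCast_mem_intRange hk)
  induction n with
  | zero => simpa using hf.map_zero (by simpa using mem (Nat.zero_le M))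
  | succ n ih =>
    have h₁ : f 1 = 1 := hf.map_one (by simpa using mem (by omega : 1 ≤ M))
    have hsucc := hf.map_add n 1 (mem (by omega)) (by simpa using mem (by omega : 1 ≤ M))
      (by simpa using mem hn)
    rw [Nat.cast_succ, hsucc, ih (by omega), h₁]

theorem IsPartialHomOn.map_intCast (hf : IsPartialHomOn A f) {M : ℕ} (hA : intRange K M ⊆ A)
    {k : ℤ} (hk : k.natAbs ≤ M) : f k = k := by
  have h₀ : (0 : K) ∈ A := by simpa using hA (natCast_mem_intRange (Nat.zero_le M))
  obtain ⟨n, rfl | rfl⟩ := Int.eq_nat_or_neg k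
  · exact_mod_cast hf.map_natCast hA (by omega)
  · have hn : n ≤ M := by omega
    have hsum := hf.map_add (-n : ℤ) n (hA (intCast_mem_intRange hk))
      (hA (natCast_mem_intRange hn)) (by simpa using h₀)
    push_cast at hsum ⊢
    rw [neg_add_cancel, hf.map_zero h₀, hf.map_natCast hA hn] at hsum
    exact eq_neg_of_add_eq_zero_left hsum.symm

end Ring

section DivisionRing

variable {K : Type*} [DivisionRing K] [DecidableEq K]

variable (K) in
noncomputable def ratSet (q : ℚ) : Finset K :=
  insert (q : K) (intRange K (max q.num.natAbs q.den))

theorem IsPartialHomOn.map_ratCast [CharZero K] {A : Finset K} {f : K → K}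
    (hf : IsPartialHomOn A f) {q : ℚ} (hA : ratSet K q ⊆ A) : f q = q := by
  have hrange : intRange K (max q.num.natAbs q.den) ⊆ A := (subset_insert _ _).trans hA
  have hden : f (q.den : ℤ) = (q.den : ℤ) := hf.map_intCast hrange (by simp)
  have hnum : f q.num = q.num := hf.map_intCast hrange (by simp)
  have hq : (q : K) * (q.den : ℤ) = q.num := by
    rw [Int.cast_natCast]; exact_mod_cast q.mul_den_eq_num
  have hmul := hf.map_mul q (q.den : ℤ) (hA (mem_insert_self _ _))
    (hrange (intCast_mem_intRange (by simp))) (hq ▸ hrange (intCast_mem_intRange (by simp)))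
  rw [hq, hnum, hden, ← hq] at hmul
  exact (mul_left_injective₀ (by simp [q.den_nz]) hmul).symm

end DivisionRing

section Field

open MvPolynomial

variable {K : Type*} [Field K] [CharZero K] [DecidableEq K]

theorem exists_finset_isPartialHomOn_map_aeval {σ : Type*} (P : MvPolynomial σ ℚ) (x : σ → K) :
    ∃ A : Finset K, aeval x P ∈ A ∧
      ∀ f, IsPartialHomOn A f → f (aeval x P) = aeval (f ∘ x) P := by
  induction P using MvPolynomial.induction_on with
  | C a =>
    refine ⟨ratSet K a, by simp [ratSet], fun f hf => ?_⟩
    simpa using hf.map_ratCast subset_rfl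
  | add P Q hP hQ =>
    obtain ⟨A, hPA, hA⟩ := hP
    obtain ⟨B, hQB, hB⟩ := hQ
    refine ⟨insert (aeval x (P + Q)) (A ∪ B), mem_insert_self _ _, fun f hf => ?_⟩
    have hsub : A ∪ B ⊆ insert (aeval x (P + Q)) (A ∪ B) := subset_insert _ _
    rw [map_add, hf.map_add _ _ (hsub (mem_union_left _ hPA)) (hsub (mem_union_right _ hQB))
      (by simp), hA f (hf.mono (subset_union_left.trans hsub)),
      hB f (hf.mono (subset_union_right.trans hsub)), map_add]
  | mul_X P n hP =>
    obtain ⟨A, hPA, hA⟩ := hP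
    refine ⟨insert (aeval x (P * X n)) (insert (x n) A), mem_insert_self _ _, fun f hf => ?_⟩
    have hsub : insert (x n) A ⊆ insert (aeval x (P * X n)) (insert (x n) A) := subset_insert _ _
    rw [map_mul, aeval_X, hf.map_mul _ _ (hsub (mem_insert_of_mem hPA))
      (hsub (mem_insert_self _ _)) (by simp), hA f (hf.mono ((subset_insert _ _).trans hsub)),
      map_mul, aeval_X, Function.comp_apply]

theorem exists_finset_isPartialHomOn_aeval_eq_zero {σ : Type*} {P : MvPolynomial σ ℚ}
    {x : σ → K} (hP : aeval x P = 0) :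
    ∃ A : Finset K, ∀ f, IsPartialHomOn A f → aeval (f ∘ x) P = 0 := by
  obtain ⟨A, hPA, hA⟩ := exists_finset_isPartialHomOn_map_aeval P x
  refine ⟨A, fun f hf => ?_⟩
  rw [← hA f hf, hP, hf.map_zero (hP ▸ hPA)]

end Field

namespace Padic

variable {p : ℕ} [Fact p.Prime]

open Polynomial in
theorem exists_pow_eq_one_add_mul_pow {e : ℕ} (he : p.Coprime e) {t : ℚ_[p]} (ht : ‖t‖ ≤ 1) :
    ∃ y : ℚ_[p], y ^ e = 1 + p * t ^ e := by
  let T : ℤ_[p] := ⟨t, ht⟩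
  obtain ⟨c, hc⟩ : ∃ c : ℤ_[p], c = 1 + p * T ^ e := ⟨_, rfl⟩
  have hval : (X ^ e - C c).aeval (1 : ℤ_[p]) = -(p * T ^ e) := by simp [hc]
  have hderiv : (X ^ e - C c).derivative.aeval (1 : ℤ_[p]) = (e : ℤ_[p]) := by
    simp [derivative_X_pow]
  have hnorm :
      ‖(X ^ e - C c).aeval (1 : ℤ_[p])‖ < ‖(X ^ e - C c).derivative.aeval (1 : ℤ_[p])‖ ^ 2 := by
    rw [hval, hderiv, PadicInt.norm_natCast_eq_one_iff.2 he, norm_neg, one_pow, norm_mul,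
      PadicInt.norm_p]
    calc (p : ℝ)⁻¹ * ‖T ^ e‖ ≤ (p : ℝ)⁻¹ * 1 := by gcongr; exact PadicInt.norm_le_one _
      _ < 1 := by rw [mul_one]; exact inv_lt_one_of_one_lt₀ (mod_cast (Fact.out : p.Prime).one_lt)
  obtain ⟨z, hz, -⟩ := hensels_lemma hnorm
  have hzc : z ^ e = 1 + p * T ^ e := by rw [← hc]; simpa [sub_eq_zero] using hz
  exact ⟨z, by exact_mod_cast congrArg ((↑) : ℤ_[p] → ℚ_[p]) hzc⟩

theorem norm_le_one_of_pow_eq_one_add_mul_pow {e : ℕ} (he : 2 ≤ e) {x y : ℚ_[p]}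
    (h : y ^ e = 1 + p * x ^ e) : ‖x‖ ≤ 1 := by
  by_contra! hx
  have hp : (1 : ℝ) < p := mod_cast (Fact.out : p.Prime).one_lt
  have hx0 : x ≠ 0 := by rintro rfl; simp at hx; linarith
  have hpx0 : (p : ℚ_[p]) * x ^ e ≠ 0 :=
    mul_ne_zero (Nat.cast_ne_zero.2 (Fact.out : p.Prime).ne_zero) (pow_ne_zero _ hx0)
  have hvx : x.valuation < 0 := not_le.1 fun h => hx.not_ge ((norm_le_one_iff_val_nonneg x).2 h)
  have hvpx : ((p : ℚ_[p]) * x ^ e).valuation = 1 + e * x.valuation := by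
    rw [valuation_mul (Nat.cast_ne_zero.2 (Fact.out : p.Prime).ne_zero) (pow_ne_zero _ hx0),
      valuation_p, valuation_pow]
  have hpx : 1 < ‖(p : ℚ_[p]) * x ^ e‖ := by
    rw [norm_eq_zpow_neg_valuation hpx0, hvpx]
    exact one_lt_zpow₀ hp (by nlinarith)
  have hy : ‖y ^ e‖ = ‖(p : ℚ_[p]) * x ^ e‖ := by
    rw [h, add_eq_max_of_ne (by simpa using hpx.ne), norm_one, max_eq_right hpx.le]
  have hy0 : y ≠ 0 := by
    rintro rfl
    rw [zero_pow (by omega), norm_zero] at hy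
    linarith
  rw [norm_eq_zpow_neg_valuation (pow_ne_zero _ hy0), norm_eq_zpow_neg_valuation hpx0,
    valuation_pow, hvpx] at hy
  have hval := neg_inj.1 (zpow_right_injective₀ (by positivity) hp.ne' hy)
  have hdvd : (e : ℤ) ∣ 1 := ⟨y.valuation - x.valuation, by linear_combination -hval⟩
  have := Int.le_of_dvd one_pos hdvd
  omega

theorem norm_le_one_iff_exists_pow_eq_one_add_mul_pow {e : ℕ} (he : 2 ≤ e) (hpe : p.Coprime e)
    (x : ℚ_[p]) : ‖x‖ ≤ 1 ↔ ∃ y : ℚ_[p], y ^ e = 1 + p * x ^ e :=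
  ⟨exists_pow_eq_one_add_mul_pow hpe, fun ⟨_, h⟩ => norm_le_one_of_pow_eq_one_add_mul_pow he h⟩

open MvPolynomial in
theorem exists_finset_forall_isPartialHomOn_ne [DecidableEq ℚ_[p]] (r s : ℚ_[p]) (hs : s ≠ r) :
    ∃ W : Finset ℚ_[p], ∀ f, IsPartialHomOn W f → f r ≠ s := by
  have hp : (p : ℝ)⁻¹ < 1 := inv_lt_one_of_one_lt₀ (mod_cast (Fact.out : p.Prime).one_lt)
  have hpN_pos (N : ℕ) : (0 : ℝ) < (p : ℝ)⁻¹ ^ N := by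
    have := (Fact.out : p.Prime).pos; positivity
  have hpN_norm (N : ℕ) : ‖(p : ℚ_[p]) ^ N‖ = (p : ℝ)⁻¹ ^ N := by rw [norm_pow, norm_p]
  obtain ⟨N, hN⟩ := exists_pow_lt_of_lt_one (norm_pos_iff.2 (sub_ne_zero.2 hs)) hp
  obtain ⟨q, hq⟩ := rat_dense p r (hpN_pos N)
  have hpN : (p : ℚ_[p]) ^ N ≠ 0 := by rw [← norm_ne_zero_iff, hpN_norm]; exact (hpN_pos N).ne'
  set t := (r - q) / (p : ℚ_[p]) ^ N
  have ht : ‖t‖ ≤ 1 := by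
    rw [norm_div, hpN_norm, div_le_one (hpN_pos N)]; exact hq.le
  have he : 2 ≤ p + 1 := by have := (Fact.out : p.Prime).two_le; omega
  have hZp := norm_le_one_iff_exists_pow_eq_one_add_mul_pow he (Nat.coprime_self_add_right.2 (Nat.coprime_one_right p))
  obtain ⟨y, hy⟩ := (hZp t).1 ht
  obtain ⟨W₁, hW₁⟩ := exists_finset_isPartialHomOn_aeval_eq_zero (x := ![y, t, r])
    (P := X 0 ^ (p + 1) - (1 + C (p : ℚ) * X 1 ^ (p + 1))) (by simp [hy])
  obtain ⟨W₂, hW₂⟩ := exists_finset_isPartialHomOn_aeval_eq_zero (x := ![y, t, r])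
    (P := C ((p : ℚ) ^ N) * X 1 + C q - X 2) (by simp [t]; field_simp; ring)
  refine ⟨W₁ ∪ W₂, fun f hf hfr => ?_⟩
  have h₁ := hW₁ f (hf.mono subset_union_left)
  have h₂ := hW₂ f (hf.mono subset_union_right)
  simp only [map_sub, map_add, map_mul, map_pow, map_one, aeval_X, aeval_C, eq_ratCast,
    Function.comp_apply, Matrix.cons_val_zero, Matrix.cons_val_one, Matrix.cons_val] at h₁ h₂
  push_cast at h₂
  have hft : ‖f t‖ ≤ 1 := (hZp (f t)).2 ⟨f y, sub_eq_zero.1 h₁⟩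
  have hsr : s - r = p ^ N * f t + -(r - q) := by rw [← hfr]; linear_combination -h₂
  have : ‖s - r‖ ≤ (p : ℝ)⁻¹ ^ N := by
    rw [hsr]
    refine (nonarchimedean _ _).trans (max_le ?_ ?_)
    · rw [norm_mul, hpN_norm]; exact mul_le_of_le_one_right (hpN_pos N).le hft
    · rw [norm_neg]; exact hq.le
  linarith

end Padic

theorem exists_adequate_of_forall_ne {K : Type*} [Field K] [CharZero K] [DecidableEq K] {r : K}
    (hr : IsAlgebraic ℚ r)
    (hsep : ∀ s ≠ r, ∃ W : Finset K, ∀ f, IsPartialHomOn W f → f r ≠ s) :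
    ∃ A : Finset K, Adequate A r := by
  obtain ⟨g, hg0, hgr⟩ := hr
  have aeval_symm (z : K) : MvPolynomial.aeval (fun _ : Unit => z)
      ((MvPolynomial.uniqueAlgEquiv ℚ Unit).symm g) = Polynomial.aeval z g := by
    rw [MvPolynomial.aeval_def, MvPolynomial.eval₂_const_uniqueAlgEquiv_symm,
      ← Polynomial.aeval_def]
  obtain ⟨A₀, hA₀⟩ := exists_finset_isPartialHomOn_aeval_eq_zero (x := fun _ : Unit => r)
    (P := (MvPolynomial.uniqueAlgEquiv ℚ Unit).symm g) (by rwa [aeval_symm])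
  choose! W hW using hsep
  set S := (g.aroots K).toFinset
  refine ⟨insert r (A₀ ∪ S.biUnion W), adequate_iff.2 ⟨mem_insert_self _ _, fun f hf => ?_⟩⟩
  have hsub : A₀ ∪ S.biUnion W ⊆ insert r (A₀ ∪ S.biUnion W) := subset_insert _ _
  have hroot : f r ∈ S := by
    have := hA₀ f (hf.mono (subset_union_left.trans hsub))
    rw [Function.comp_def, aeval_symm] at this
    exact Multiset.mem_toFinset.2 (Polynomial.mem_aroots.2 ⟨hg0, this⟩)
  by_contra hne
  exact hW (f r) hne f
    (hf.mono ((subset_biUnion_of_mem W hroot).trans (subset_union_right.trans hsub))) rfl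

/-- Every element of ℚ_p algebraic over ℚ admits a finite adequate set. -/
theorem padic_algebraic_mem_tilde (p : ℕ) [Fact p.Prime] (r : ℚ_[p])
    (hr : IsAlgebraic ℚ r) : ∃ A : Finset ℚ_[p], Adequate A r := by
  classical
  exact exists_adequate_of_forall_ne hr (Padic.exists_finset_forall_isPartialHomOn_ne r)
end

section
/- Let K be a field and r ∈ K̃ with adequate set A(r) = {r = x₁, …, xₙ} of distinct elements. Then the singleton {r} is definable in K by an existential first-order formula in the language of rings without parameters: namely, the conjunction Φ of all atomic formulas xᵢ = 1, xᵢ + xⱼ = x_k, xᵢ·xⱼ = x_k true in A(r), existentially quantified over all variables except x₁, is satisfied by x₁ = s if and only if s = r. -/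
/-- The existential formula built from the atomic relations holding among the
elements of an adequate set defines the singleton {r} in K. -/
theorem adequate_existential_definability {K : Type*} [Field K] [DecidableEq K] (n : ℕ)
    (x : Fin (n + 1) → K) (hx : Function.Injective x) (r : K) (hr : x 0 = r)
    (hA : Adequate (Finset.image x Finset.univ) r) :
    ∀ s : K,
      (∃ y : Fin (n + 1) → K, y 0 = s ∧
        (∀ i, x i = 1 → y i = 1) ∧
        (∀ i j k, x i + x j = x k → y i + y j = y k) ∧
        (∀ i j k, x i * x j = x k → y i * y j = y k)) ↔ s = r := by
  intro s
  constructor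
  · rintro ⟨y, hy0, h1, hadd, hmul⟩
    obtain ⟨hrA, hf⟩ := hA
    set f := Function.extend x y id with hfdef
    have hfx : ∀ i, f (x i) = y i := fun i => hx.extend_apply y id i
    have hmem : ∀ a : K, a ∈ Finset.image x Finset.univ → ∃ i, x i = a := by
      intro a ha
      simpa using Finset.mem_image.mp ha
    have key : f r = r := by
      apply hf f
      · intro h1A
        obtain ⟨i, hi⟩ := hmem 1 h1A
        exact (congrArg f hi.symm).trans ((hfx i).trans (h1 i hi))
      · intro a b ha hb hab
        obtain ⟨i, hi⟩ := hmem a ha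
        obtain ⟨j, hj⟩ := hmem b hb
        obtain ⟨k, hk⟩ := hmem (a + b) hab
        subst hi; subst hj
        rw [← hk]
        simp only [hfx]
        exact (hadd i j k hk.symm).symm
      · intro a b ha hb hab
        obtain ⟨i, hi⟩ := hmem a ha
        obtain ⟨j, hj⟩ := hmem b hb
        obtain ⟨k, hk⟩ := hmem (a * b) hab
        subst hi; subst hj
        rw [← hk]
        simp only [hfx]
        exact (hmul i j k hk.symm).symm
    rw [← hr, hfx, hy0] at key
    rw [← hr]
    exact key
  · rintro rfl
    exact ⟨x, hr, fun i hi => hi, fun i j k h => h, fun i j k h => h⟩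
end
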